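/- Let X be a normal random variable with mean (r − σ²/2)t and variance σ²t, where σ > 0, r ≥ 0, t > 0. Let H > S₀ > 0 and suppose ε ∈ (0, 1/2) satisfies log(1/(2ε)) > (4/5)(1 + 2r/σ²) log(H/S₀) and t < 8(log(H/S₀))²/(25σ² log(1/(2ε))). Then P(X ≥ log(H/S₀)) < ε. -/

import Mathlib

/-!
For `x ≥ c ≥ μ`, writing `(x - μ)² = ((x - c) + (c - μ))²` and dropping the nonnegative cross
term bounds the `N(μ, v)` density by `e^{-(c-μ)²/(2v)}` times the `N(c, v)` density; since
`N(c, v)` gives mass `1/2` to `[c, ∞)`, this yields `P(X ≥ c) ≤ e^{-(c-μ)²/(2v)} / 2`.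
The condition on `ε` keeps the drift `μ = (r - σ²/2)t` below `L/5`, `L = log (H/S₀)`, and the
condition on `t` then makes the exponent `(L - μ)²/(2σ²t) ≥ (4L/5)²/(2σ²t)` exceed
`log (1/(2ε))`.
-/

open MeasureTheory ProbabilityTheory Real Set
open scoped NNReal

namespace ProbabilityTheory

lemma gaussianReal_Iic_self_eq_Ici_self (μ : ℝ) (v : ℝ≥0) :
    gaussianReal μ v (Iic μ) = gaussianReal μ v (Ici μ) := by
  have hreflect : (gaussianReal μ v).map (2 * μ - ·) = gaussianReal μ v := by
    rw [gaussianReal_map_const_sub]; ring_nf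
  conv_rhs => rw [← hreflect]
  rw [Measure.map_apply (by fun_prop) measurableSet_Ici]
  congr 1
  ext x
  simp only [mem_Iic, mem_preimage, mem_Ici]
  constructor <;> intro h <;> linarith

lemma gaussianReal_Ici_self (μ : ℝ) {v : ℝ≥0} (hv : v ≠ 0) :
    gaussianReal μ v (Ici μ) = 2⁻¹ := by
  have hatom : gaussianReal μ v {μ} = 0 :=
    gaussianReal_absolutelyContinuous μ hv Real.volume_singleton
  have hsum : gaussianReal μ v (Iic μ) + gaussianReal μ v (Ici μ) = 1 := by
    rw [← measure_congr (Ioi_ae_eq_Ici' hatom), ← compl_Iic,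
      measure_add_measure_compl measurableSet_Iic, measure_univ]
  rw [gaussianReal_Iic_self_eq_Ici_self, ← two_mul, mul_comm] at hsum
  exact ENNReal.eq_inv_of_mul_eq_one_left hsum

lemma toReal_gaussianReal_apply_eq_integral (μ : ℝ) {v : ℝ≥0} (hv : v ≠ 0) (s : Set ℝ) :
    (gaussianReal μ v s).toReal = ∫ x in s, gaussianPDFReal μ v x := by
  rw [gaussianReal_apply_eq_integral μ hv,
    ENNReal.toReal_ofReal (integral_nonneg fun x ↦ gaussianPDFReal_nonneg μ v x)]

lemma gaussianPDFReal_le_exp_mul_gaussianPDFReal {μ c x : ℝ} (v : ℝ≥0) (hμc : μ ≤ c)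
    (hcx : c ≤ x) :
    gaussianPDFReal μ v x ≤ exp (-(c - μ) ^ 2 / (2 * v)) * gaussianPDFReal c v x := by
  simp only [gaussianPDFReal]
  rw [mul_left_comm, ← exp_add, ← add_div]
  gcongr
  nlinarith [mul_nonneg (sub_nonneg.mpr hcx) (sub_nonneg.mpr hμc)]

lemma toReal_gaussianReal_Ici_le {μ c : ℝ} {v : ℝ≥0} (hv : v ≠ 0) (hμc : μ ≤ c) :
    (gaussianReal μ v (Ici c)).toReal ≤ exp (-(c - μ) ^ 2 / (2 * v)) / 2 := by
  have hint := (integrable_gaussianPDFReal c v).restrict (s := Ici c)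
  calc (gaussianReal μ v (Ici c)).toReal
      = ∫ x in Ici c, gaussianPDFReal μ v x := toReal_gaussianReal_apply_eq_integral μ hv _
    _ ≤ ∫ x in Ici c, exp (-(c - μ) ^ 2 / (2 * v)) * gaussianPDFReal c v x :=
        setIntegral_mono_on (integrable_gaussianPDFReal μ v).restrict (hint.const_mul _)
          measurableSet_Ici fun x hx ↦ gaussianPDFReal_le_exp_mul_gaussianPDFReal v hμc hx
    _ = exp (-(c - μ) ^ 2 / (2 * v)) * (gaussianReal c v (Ici c)).toReal := by
        rw [integral_const_mul, toReal_gaussianReal_apply_eq_integral c hv]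
    _ = exp (-(c - μ) ^ 2 / (2 * v)) / 2 := by
        rw [gaussianReal_Ici_self c hv, ENNReal.toReal_inv]
        norm_num [div_eq_mul_inv]

end ProbabilityTheory

section LogReturn

variable {L A : ℝ}

lemma drift_le_fifth {r σ t : ℝ} (hσ : 0 < σ) (ht : 0 < t) (hL : 0 < L)
    (hA : (4 / 5) * (1 + 2 * r / σ ^ 2) * L < A) (htA : 25 * (σ ^ 2 * t) * A < 8 * L ^ 2) :
    (r - σ ^ 2 / 2) * t ≤ L / 5 := by
  rw [show (4 / 5) * (1 + 2 * r / σ ^ 2) * L = 4 * (σ ^ 2 + 2 * r) * L / (5 * σ ^ 2) by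
    field_simp, div_lt_iff₀ (by positivity)] at hA
  by_contra! hdrift
  nlinarith [mul_lt_mul_of_pos_right hA ht, mul_lt_mul_of_pos_right hdrift hL,
    mul_pos (mul_pos (pow_pos hσ 2) ht) hL]

lemma lt_sq_sub_div_two_mul {μ v : ℝ} (hv : 0 < v) (hL : 0 < L) (hμ : μ ≤ L / 5)
    (hvA : 25 * v * A < 8 * L ^ 2) :
    A < (L - μ) ^ 2 / (2 * v) := by
  rw [lt_div_iff₀ (by positivity)]
  nlinarith [mul_self_le_mul_self (by positivity : (0 : ℝ) ≤ 4 * L / 5)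
    (by linarith : 4 * L / 5 ≤ L - μ)]

end LogReturn

lemma exp_neg_log_one_div_two_mul {ε : ℝ} (hε : 0 < ε) : exp (-log (1 / (2 * ε))) = 2 * ε := by
  rw [one_div, log_inv, neg_neg, exp_log (by positivity)]

theorem lognormal_upper_tail_prob_general (r σ t S₀ H ε : ℝ)
    (hσ : 0 < σ) (ht : 0 < t) (hS₀ : 0 < S₀) (hH : S₀ < H)
    (hε : ε ∈ Set.Ioo (0 : ℝ) (1 / 2))
    (hεcond : Real.log (1 / (2 * ε)) > (4 / 5) * (1 + 2 * r / σ ^ 2) * Real.log (H / S₀))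
    (htcond : t < 8 * (Real.log (H / S₀)) ^ 2 / (25 * σ ^ 2 * Real.log (1 / (2 * ε)))) :
    ((gaussianReal ((r - σ ^ 2 / 2) * t) (Real.toNNReal (σ ^ 2 * t)))
        (Set.Ici (Real.log (H / S₀)))).toReal < ε := by
  set L := log (H / S₀)
  set A := log (1 / (2 * ε))
  have hL : 0 < L := log_pos ((one_lt_div hS₀).mpr hH)
  have hA : 0 < A := log_pos ((one_lt_div (by linarith [hε.1])).mpr (by linarith [hε.2]))
  have hvar : 0 < σ ^ 2 * t := by positivity
  have htA : 25 * (σ ^ 2 * t) * A < 8 * L ^ 2 := by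
    rw [lt_div_iff₀ (by positivity)] at htcond
    linarith
  have hdrift := drift_le_fifth hσ ht hL hεcond htA
  have hexponent := lt_sq_sub_div_two_mul hvar hL hdrift htA
  calc _ ≤ exp (-(L - (r - σ ^ 2 / 2) * t) ^ 2 / (2 * (σ ^ 2 * t))) / 2 := by
        simpa [Real.coe_toNNReal _ hvar.le] using
          toReal_gaussianReal_Ici_le (Real.toNNReal_pos.mpr hvar).ne' (by linarith)
    _ < exp (-A) / 2 := by
        gcongr
        rw [neg_div]
        exact neg_lt_neg hexponent
    _ = ε := by rw [exp_neg_log_one_div_two_mul hε.1]; ring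

/-- Upper-tail probability bound for the log-return: if `X ~ N((r - σ²/2)t, σ²t)`,
`H > S₀ > 0`, `ε ∈ (0, 1/2)` satisfies `log(1/(2ε)) > (4/5)(1 + 2r/σ²) log(H/S₀)` and
`t < 8(log(H/S₀))²/(25σ² log(1/(2ε)))`, then `P(X ≥ log(H/S₀)) < ε`. -/
theorem lognormal_upper_tail_prob (r σ t S₀ H ε : ℝ)
    (hσ : 0 < σ) (hr : 0 ≤ r) (ht : 0 < t) (hS₀ : 0 < S₀) (hH : S₀ < H)
    (hε : ε ∈ Set.Ioo (0 : ℝ) (1 / 2))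
    (hεcond : Real.log (1 / (2 * ε)) > (4 / 5) * (1 + 2 * r / σ ^ 2) * Real.log (H / S₀))
    (htcond : t < 8 * (Real.log (H / S₀)) ^ 2 / (25 * σ ^ 2 * Real.log (1 / (2 * ε)))) :
    ((gaussianReal ((r - σ ^ 2 / 2) * t) (Real.toNNReal (σ ^ 2 * t)))
        (Set.Ici (Real.log (H / S₀)))).toReal < ε :=
  lognormal_upper_tail_prob_general r σ t S₀ H ε hσ ht hS₀ hH hε hεcond htcond
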